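/- Let A be a finite set, G a group, H ≤ G a subgroup, F ⊆ H a finite subset and L ⊆ A^F. Let X ⊆ A^G and Y ⊆ A^H be the SFTs defined by (F, L) on G and on H respectively. Let g ∈ G and suppose there exists x ∈ X with g·x = x. Then for every t ∈ G, every integer n > 0 and every h ∈ H such that g^n = t⁻¹ h t, there exists y ∈ Y with h·y = y; in other words, Cl(g) ∩ R_G(Free(Y)) = ∅. -/
import Mathlib


variable {G A : Type*}

/-- The left shift action of a group on configurations: `(shift g x) h = x (g⁻¹ * h)`. -/
def shift [Group G] (g : G) (x : G → A) : G → A := fun h => x (g⁻¹ * h)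

/-- The subshift of finite type on `G` defined by the shape `F` and the pattern set `L`:
all configurations `x` such that for every `g`, the restriction of `g • x` to `F` lies in `L`. -/
def SFT [Group G] (F : Set G) (L : Set (F → A)) : Set (G → A) :=
  {x | ∀ g : G, (fun f : F => shift g x f) ∈ L}

/-- The subshift of finite type on the subgroup `H` defined by the shape `F ⊆ H`
and the pattern set `L`. -/
def SFTon [Group G] (H : Subgroup G) (F : Set G) (hF : F ⊆ (H : Set G)) (L : Set (F → A)) :
    Set (↥H → A) :=
  {y | ∀ h : ↥H, (fun f : F => y (h⁻¹ * ⟨(f : G), hF f.2⟩)) ∈ L}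

/-- The free part of a subshift: elements acting freely on every configuration. -/
def freePart [Group G] (X : Set (G → A)) : Set G := {g | ∀ x ∈ X, shift g x ≠ x}

/-- If some `x` in the SFT `X` defined by `(F, L)` on `G` is fixed by `g`,
then whenever `g ^ n = t⁻¹ * h * t` with `n > 0` and `h ∈ H`, some configuration of the SFT
`Y` defined by `(F, L)` on `H` is fixed by `h`; i.e. `Cl(g) ∩ R_G(Free(Y)) = ∅`. -/
theorem exists_fixed_in_subgroup_sft_of_fixed
    [Group G] [Finite A] (H : Subgroup G) (F : Set G) (hFfin : F.Finite)
    (hF : F ⊆ (H : Set G)) (L : Set (F → A))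
    (g : G) (x : G → A) (hx : x ∈ SFT F L) (hgx : shift g x = x) :
    ∀ t : G, ∀ n : ℕ, 0 < n → ∀ h : ↥H, g ^ n = t⁻¹ * (h : G) * t →
      ∃ y ∈ SFTon H F hF L, shift h y = y := by
  intro t n _ h hconj
  have shift_mul : ∀ (a b : G) (z : G → A), shift (a * b) z = shift a (shift b z) := by
    intro a b z
    funext u
    simp [shift, mul_assoc]
  -- x is fixed by g^n
  have hpow : ∀ m : ℕ, shift (g ^ m) x = x := by
    intro m
    induction m with
    | zero => funext u; simp [shift]
    | succ k ih => rw [pow_succ, shift_mul, hgx, ih]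
  -- x' = shift t x is in the SFT and is fixed by h
  set x' : G → A := shift t x with hx'
  have hx'mem : x' ∈ SFT F L := by
    intro k
    have := hx (k * t)
    simpa [shift_mul] using this
  have hfix : shift ((h : G)) x' = x' := by
    have hh : (h : G) = t * g ^ n * t⁻¹ := by
      rw [hconj]; group
    rw [hx', hh]
    calc shift (t * g ^ n * t⁻¹) (shift t x)
        = shift (t * g ^ n * t⁻¹ * t) x := (shift_mul _ _ _).symm
      _ = shift (t * g ^ n) x := by rw [show t * g ^ n * t⁻¹ * t = t * g ^ n by group]
      _ = shift t (shift (g ^ n) x) := shift_mul _ _ _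
      _ = shift t x := by rw [hpow]
  refine ⟨fun k => x' (k : G), ?_, ?_⟩
  · intro k
    have := hx'mem (k : G)
    simpa [shift] using this
  · funext u
    have := congrFun hfix (u : G)
    simpa [shift] using this
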